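/- arXiv:1902.03073 — 7 statements merged into one kernel-verified Lean document; each statement's English description precedes it below -/
import Mathlib

section
/- If a sequence of nonnegative reals satisfies e_{k+1} ≤ A₂·e_k² + A₁·e_k + A₀ with A₂ > 0, A₁ ∈ [0,1), and there exists τ ∈ (A₁, 1) with e_0 ≤ (τ − A₁)/A₂ and A₀ ≤ (1 − τ)(τ − A₁)/A₂, then e_k ≤ (τ − A₁)/A₂ for all k and limsup_{k→∞} e_k ≤ A₀/(1 − τ). -/
/-!
On `[0, R]` with `R = (τ - A₁) / A₂` the quadratic term is dominated by a linear one,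
`A₂ x² ≤ (τ - A₁) x`, so there the recursion is bounded by the contraction `x ↦ τ x + A₀`.
The smallness of `A₀` makes `[0, R]` invariant under that contraction, and a sequence
dominated by a contraction with ratio `τ < 1` approaches its fixed point `A₀ / (1 - τ)`
geometrically: `e k - A₀ / (1 - τ) ≤ τ ^ k (e 0 - A₀ / (1 - τ))`.
-/

open Filter Topology

lemma quadratic_le_linear_of_le_div {A₂ A₁ τ x : ℝ} (hA2 : 0 < A₂) (hx0 : 0 ≤ x)
    (hx : x ≤ (τ - A₁) / A₂) : A₂ * x ^ 2 + A₁ * x ≤ τ * x := by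
  have hA2x : A₂ * x ≤ τ - A₁ := by rwa [le_div_iff₀ hA2, mul_comm] at hx
  nlinarith [mul_le_mul_of_nonneg_right hA2x hx0]

lemma le_div_of_le_quadratic_recursion {e : ℕ → ℝ} {A₂ A₁ A₀ τ : ℝ}
    (hA2 : 0 < A₂) (hτ : 0 ≤ τ) (he : ∀ k, 0 ≤ e k)
    (hrec : ∀ k, e (k + 1) ≤ A₂ * e k ^ 2 + A₁ * e k + A₀)
    (h0 : e 0 ≤ (τ - A₁) / A₂) (hA0 : A₀ ≤ (1 - τ) * (τ - A₁) / A₂) (k : ℕ) :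
    e k ≤ (τ - A₁) / A₂ := by
  induction k with
  | zero => exact h0
  | succ n ih =>
    have hquad := quadratic_le_linear_of_le_div hA2 (he n) ih
    have hτR := mul_le_mul_of_nonneg_left ih hτ
    rw [mul_div_assoc] at hA0
    linarith [hrec n]

lemma sub_le_pow_mul_of_le_mul_add {e : ℕ → ℝ} {τ c : ℝ} (hτ0 : 0 ≤ τ) (hτ1 : τ ≠ 1)
    (h : ∀ k, e (k + 1) ≤ τ * e k + c) (k : ℕ) :
    e k - c / (1 - τ) ≤ τ ^ k * (e 0 - c / (1 - τ)) := by
  induction k with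
  | zero => simp
  | succ n ih =>
    have hfix : τ * (c / (1 - τ)) + c = c / (1 - τ) := by
      field_simp [sub_ne_zero.mpr hτ1.symm]
      ring
    calc e (n + 1) - c / (1 - τ) ≤ τ * (e n - c / (1 - τ)) := by linarith [h n]
      _ ≤ τ * (τ ^ n * (e 0 - c / (1 - τ))) := mul_le_mul_of_nonneg_left ih hτ0
      _ = τ ^ (n + 1) * (e 0 - c / (1 - τ)) := by ring

lemma limsup_le_div_of_le_mul_add {e : ℕ → ℝ} {τ c : ℝ} (hτ0 : 0 ≤ τ) (hτ1 : τ < 1)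
    (hbdd : BddBelow (Set.range e)) (h : ∀ k, e (k + 1) ≤ τ * e k + c) :
    limsup e atTop ≤ c / (1 - τ) := by
  set L := c / (1 - τ)
  obtain ⟨b, hb⟩ := hbdd
  have htend : Tendsto (fun k => τ ^ k * (e 0 - L) + L) atTop (𝓝 L) := by
    simpa using
      ((tendsto_pow_atTop_nhds_zero_of_lt_one hτ0 hτ1).mul_const (e 0 - L)).add_const L
  calc limsup e atTop ≤ limsup (fun k => τ ^ k * (e 0 - L) + L) atTop :=
        limsup_le_limsup
          (Eventually.of_forall fun k => by linarith [sub_le_pow_mul_of_le_mul_add hτ0 hτ1.ne h k])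
          (isCoboundedUnder_le_of_le atTop fun k => hb ⟨k, rfl⟩) htend.isBoundedUnder_le
    _ = L := htend.limsup_eq

theorem stmt_1_general (e : ℕ → ℝ) (A₂ A₁ A₀ τ : ℝ)
    (hA2 : 0 < A₂) (hA1l : 0 ≤ A₁)
    (hτl : A₁ < τ) (hτu : τ < 1)
    (he : ∀ k, 0 ≤ e k)
    (hrec : ∀ k, e (k + 1) ≤ A₂ * (e k) ^ 2 + A₁ * e k + A₀)
    (h0 : e 0 ≤ (τ - A₁) / A₂)
    (hA0small : A₀ ≤ (1 - τ) * (τ - A₁) / A₂) :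
    (∀ k, e k ≤ (τ - A₁) / A₂) ∧
      Filter.limsup e Filter.atTop ≤ A₀ / (1 - τ) := by
  have hτ : 0 ≤ τ := hA1l.trans hτl.le
  have hbound := le_div_of_le_quadratic_recursion hA2 hτ he hrec h0 hA0small
  have hlin : ∀ k, e (k + 1) ≤ τ * e k + A₀ := fun k => by
    linarith [hrec k, quadratic_le_linear_of_le_div hA2 (he k) (hbound k)]
  exact ⟨hbound, limsup_le_div_of_le_mul_add hτ hτu ⟨0, by rintro _ ⟨k, rfl⟩; exact he k⟩ hlin⟩

/-- Quadratic recursion bound: if `e (k+1) ≤ A₂ e k ^ 2 + A₁ e k + A₀` with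
`A₂ > 0`, `A₁ ∈ [0,1)`, `A₀ ≥ 0`, and `τ ∈ (A₁, 1)` with `e 0 ≤ (τ - A₁)/A₂`
and `A₀ ≤ (1 - τ)(τ - A₁)/A₂`, then `e k ≤ (τ - A₁)/A₂` for all `k` and
`limsup e ≤ A₀ / (1 - τ)`. -/
theorem stmt_1 (e : ℕ → ℝ) (A₂ A₁ A₀ τ : ℝ)
    (hA2 : 0 < A₂) (hA1l : 0 ≤ A₁) (hA1u : A₁ < 1) (hA0 : 0 ≤ A₀)
    (hτl : A₁ < τ) (hτu : τ < 1)
    (he : ∀ k, 0 ≤ e k)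
    (hrec : ∀ k, e (k + 1) ≤ A₂ * (e k) ^ 2 + A₁ * e k + A₀)
    (h0 : e 0 ≤ (τ - A₁) / A₂)
    (hA0small : A₀ ≤ (1 - τ) * (τ - A₁) / A₂) :
    (∀ k, e k ≤ (τ - A₁) / A₂) ∧
      Filter.limsup e Filter.atTop ≤ A₀ / (1 - τ) :=
  stmt_1_general e A₂ A₁ A₀ τ hA2 hA1l hτl hτu he hrec h0 hA0small
end

section
/- Let S be a symmetric matrix with ‖S‖ ≤ 1 − γm and smallest singular value at least 1 − γL > 0, and let P be a symmetric positive semidefinite matrix with ‖P‖ ≤ 1 such that PS is symmetric positive semidefinite. Then the smallest eigenvalue of I − PS is at least γm, and hence the smallest singular value of γ^{-1}·S·(I − PS) is at least m(1 − γL); in particular ‖(γ^{-1}·S·(I − PS))^{-1}‖ ≤ 1/(m(1 − γL)) whenever the matrix is invertible. -/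
/-! Since `‖P S‖ ≤ ‖P‖ ‖S‖ ≤ 1 - γm`, the form `⟪x, (I - P S) x⟫` is at least `γm ‖x‖²`, so by
Cauchy–Schwarz `I - P S` stretches every vector by at least `γm`; composing with `S`, which
stretches by at least `1 - γL`, and scaling by `γ⁻¹` gives the lower bound `m (1 - γL)`. A map
with lower bound `c > 0` has every right inverse of norm at most `1 / c`. -/

open ContinuousLinearMap

section LowerBounds

variable {E F G : Type*}

theorem mul_norm_sq_le_inner_one_sub_apply [NormedAddCommGroup E] [InnerProductSpace ℝ E]
    {A : E →L[ℝ] E} {c : ℝ} (hA : ‖A‖ ≤ 1 - c) (x : E) :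
    c * ‖x‖ ^ 2 ≤ inner ℝ x ((1 - A) x) := by
  have hAx : inner ℝ x (A x) ≤ (1 - c) * ‖x‖ ^ 2 :=
    calc inner ℝ x (A x) ≤ ‖x‖ * ‖A x‖ := real_inner_le_norm _ _
      _ ≤ ‖x‖ * ((1 - c) * ‖x‖) := by gcongr; exact A.le_of_opNorm_le hA x
      _ = (1 - c) * ‖x‖ ^ 2 := by ring
  rw [sub_apply, one_apply_eq_self, inner_sub_right, real_inner_self_eq_norm_sq]
  linarith

theorem mul_norm_le_norm_apply_of_mul_norm_sq_le_inner [NormedAddCommGroup E]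
    [InnerProductSpace ℝ E] {A : E →L[ℝ] E} {c : ℝ} {x : E}
    (h : c * ‖x‖ ^ 2 ≤ inner ℝ x (A x)) : c * ‖x‖ ≤ ‖A x‖ := by
  rcases eq_or_ne x 0 with rfl | hx
  · simp
  have hx : 0 < ‖x‖ := norm_pos_iff.mpr hx
  have : c * ‖x‖ * ‖x‖ ≤ ‖A x‖ * ‖x‖ :=
    calc c * ‖x‖ * ‖x‖ = c * ‖x‖ ^ 2 := by ring
      _ ≤ inner ℝ x (A x) := h
      _ ≤ ‖x‖ * ‖A x‖ := real_inner_le_norm _ _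
      _ = ‖A x‖ * ‖x‖ := mul_comm _ _
  exact le_of_mul_le_mul_right this hx

theorem mul_mul_norm_le_norm_comp_apply [SeminormedAddCommGroup E]
    [SeminormedAddCommGroup F] [SeminormedAddCommGroup G] {A : E → F} {B : F → G} {a b : ℝ}
    (hA : ∀ x, a * ‖x‖ ≤ ‖A x‖) (hB : ∀ y, b * ‖y‖ ≤ ‖B y‖) (hb : 0 ≤ b) (x : E) :
    b * a * ‖x‖ ≤ ‖B (A x)‖ :=
  calc b * a * ‖x‖ = b * (a * ‖x‖) := mul_assoc _ _ _
    _ ≤ b * ‖A x‖ := mul_le_mul_of_nonneg_left (hA x) hb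
    _ ≤ ‖B (A x)‖ := hB _

theorem opNorm_le_inv_of_comp_eq_one [NormedAddCommGroup E] [NormedSpace ℝ E]
    [NormedAddCommGroup F] [NormedSpace ℝ F] {A : E →L[ℝ] F} {T : F →L[ℝ] E} {c : ℝ}
    (hc : 0 < c) (hA : ∀ x, c * ‖x‖ ≤ ‖A x‖) (hAT : A ∘L T = 1) : ‖T‖ ≤ 1 / c := by
  refine T.opNorm_le_bound (by positivity) fun y => ?_
  have hy : A (T y) = y := by simpa using congrArg (fun f => f y) hAT
  rw [div_mul_eq_mul_div, le_div_iff₀ hc, mul_comm, one_mul]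
  simpa only [hy] using hA (T y)

end LowerBounds

theorem stmt_3_general {n : ℕ}
    (S P : EuclideanSpace ℝ (Fin n) →L[ℝ] EuclideanSpace ℝ (Fin n))
    (m L γ : ℝ) (hm : 0 < m) (hmL : m ≤ L) (hγ0 : 0 < γ) (hγL : γ < 1 / L)
    (hPnorm : ‖P‖ ≤ 1)
    (hSnorm : ‖S‖ ≤ 1 - γ * m)
    (hSmin : ∀ x, (1 - γ * L) * ‖x‖ ≤ ‖S x‖) :
    (∀ x, γ * m * ‖x‖ ^ 2 ≤ (inner ℝ x ((1 - P ∘L S) x) : ℝ)) ∧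
      (∀ x, m * (1 - γ * L) * ‖x‖ ≤ ‖(γ⁻¹ • (S ∘L (1 - P ∘L S))) x‖) ∧
      (∀ T : EuclideanSpace ℝ (Fin n) →L[ℝ] EuclideanSpace ℝ (Fin n),
        T ∘L (γ⁻¹ • (S ∘L (1 - P ∘L S))) = 1 →
        (γ⁻¹ • (S ∘L (1 - P ∘L S))) ∘L T = 1 →
        ‖T‖ ≤ 1 / (m * (1 - γ * L))) := by
  have hγL' : 0 < 1 - γ * L := by
    have hL : 0 < L := hm.trans_le hmL
    rw [lt_div_iff₀ hL] at hγL
    linarith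
  have hPS : ‖P ∘L S‖ ≤ 1 - γ * m :=
    (opNorm_comp_le P S).trans <| (mul_le_of_le_one_left (norm_nonneg S) hPnorm).trans hSnorm
  have hcoercive := mul_norm_sq_le_inner_one_sub_apply hPS
  have hlower : ∀ x, m * (1 - γ * L) * ‖x‖ ≤ ‖(γ⁻¹ • (S ∘L (1 - P ∘L S))) x‖ := by
    intro x
    have hSx := mul_mul_norm_le_norm_comp_apply
      (fun x => mul_norm_le_norm_apply_of_mul_norm_sq_le_inner (hcoercive x)) hSmin hγL'.le x
    rw [smul_apply, comp_apply, norm_smul, Real.norm_of_nonneg (inv_nonneg.mpr hγ0.le),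
      le_inv_mul_iff₀ hγ0]
    linarith
  exact ⟨hcoercive, hlower, fun T _ hT => opNorm_le_inv_of_comp_eq_one (by positivity) hlower hT⟩

/-- Let `S` be symmetric with `‖S‖ ≤ 1 - γm` and smallest singular value at
least `1 - γL > 0`, and `P` symmetric positive semidefinite with `‖P‖ ≤ 1`
such that `P S` is symmetric positive semidefinite. Then the smallest
eigenvalue of `I - P S` is at least `γ m`, the smallest singular value of
`γ⁻¹ S (I - P S)` is at least `m (1 - γL)`, and its inverse (whenever it
exists) has operator norm at most `1 / (m (1 - γL))`. -/
theorem stmt_3 {n : ℕ}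
    (S P : EuclideanSpace ℝ (Fin n) →L[ℝ] EuclideanSpace ℝ (Fin n))
    (m L γ : ℝ) (hm : 0 < m) (hmL : m ≤ L) (hγ0 : 0 < γ) (hγL : γ < 1 / L)
    (hS : IsSelfAdjoint S) (hP : IsSelfAdjoint P)
    (hPpsd : ∀ x, 0 ≤ (inner ℝ x (P x) : ℝ))
    (hPnorm : ‖P‖ ≤ 1)
    (hPS : IsSelfAdjoint (P ∘L S))
    (hPSpsd : ∀ x, 0 ≤ (inner ℝ x ((P ∘L S) x) : ℝ))
    (hSnorm : ‖S‖ ≤ 1 - γ * m)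
    (hSmin : ∀ x, (1 - γ * L) * ‖x‖ ≤ ‖S x‖) :
    (∀ x, γ * m * ‖x‖ ^ 2 ≤ (inner ℝ x ((1 - P ∘L S) x) : ℝ)) ∧
      (∀ x, m * (1 - γ * L) * ‖x‖ ≤ ‖(γ⁻¹ • (S ∘L (1 - P ∘L S))) x‖) ∧
      (∀ T : EuclideanSpace ℝ (Fin n) →L[ℝ] EuclideanSpace ℝ (Fin n),
        T ∘L (γ⁻¹ • (S ∘L (1 - P ∘L S))) = 1 →
        (γ⁻¹ • (S ∘L (1 - P ∘L S))) ∘L T = 1 →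
        ‖T‖ ≤ 1 / (m * (1 - γ * L))) :=
  stmt_3_general S P m L γ hm hmL hγ0 hγL hPnorm hSnorm hSmin
end

section
/- With h_k the quadratic Taylor prediction model of f at (x_k, t_k), and assuming the third-order bounds ‖∇_{xxx}f‖ ≤ C₁, ‖∇_{xtx}f‖ ≤ C₂ (and ‖∇_{txx}f‖ ≤ C₂), ‖∇_{ttx}f‖ ≤ C₃ hold everywhere, the Taylor residual satisfies ‖∇_x f(x; t_k + T_s) − ∇h_k(x)‖ ≤ (C₁/2)‖x − x_k‖² + T_s C₂ ‖x − x_k‖ + (T_s²/2) C₃ for all x. -/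
/-!
Split the residual as
`[G(tk+Ts, x) - G(tk, x) - Ts Gt(tk, x)] + Ts [Gt(tk, x) - Gt(tk, xk)]
  + [G(tk, x) - G(tk, xk) - Gx(tk, xk)(x - xk)]`.
The outer brackets are first-order Taylor remainders of maps with Lipschitz derivative, hence at
most `C₃ Ts²/2` and `C₁ ‖x - xk‖²/2`; the middle one is at most `Ts C₂ ‖x - xk‖`.
-/

open Set

theorem norm_sub_sub_smul_le_of_norm_deriv_sub_le {E : Type*} [NormedAddCommGroup E]
    [NormedSpace ℝ E] {g g' : ℝ → E} {a b C : ℝ} (hab : a ≤ b)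
    (hg : ∀ t ∈ Icc a b, HasDerivWithinAt g (g' t) (Icc a b) t)
    (hg' : ∀ t ∈ Icc a b, ‖g' t - g' a‖ ≤ C * (t - a)) :
    ‖g b - g a - (b - a) • g' a‖ ≤ C / 2 * (b - a) ^ 2 := by
  set r : ℝ → E := fun t => g t - g a - (t - a) • g' a
  have hr : ∀ t ∈ Icc a b, HasDerivWithinAt r (g' t - g' a) (Icc a b) t := fun t ht =>
    (((hg t ht).sub_const (g a)).sub (((hasDerivAt_id t).sub_const a).smul_const
      (g' a)).hasDerivWithinAt).congr_deriv (by simp)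
  have hB : ∀ t, HasDerivAt (fun t => C / 2 * (t - a) ^ 2) (C * (t - a)) t := fun t =>
    ((((hasDerivAt_id t).sub_const a).pow 2).const_mul (C / 2)).congr_deriv
      (by simp only [id_eq]; ring)
  -- the remainder `r` is fenced in by the parabola `C/2 (t - a)²`
  have hfence := image_norm_le_of_norm_deriv_right_le_deriv_boundary
    (fun t ht => (hr t ht).continuousWithinAt)
    (fun t ht => (hr t (Ico_subset_Icc_self ht)).mono_of_mem_nhdsWithin
      (Icc_mem_nhdsGE_of_mem ht))
    (by simp [r]) hB (fun t ht => hg' t (Ico_subset_Icc_self ht))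
  exact hfence (right_mem_Icc.2 hab)

theorem norm_sub_sub_fderiv_le_of_norm_fderiv_sub_le {E F : Type*} [NormedAddCommGroup E]
    [NormedSpace ℝ E] [NormedAddCommGroup F] [NormedSpace ℝ F] {f : E → F} {f' : E → E →L[ℝ] F}
    {C : ℝ} (x y : E) (hf : ∀ z, HasFDerivAt f (f' z) z)
    (hf' : ∀ z, ‖f' z - f' x‖ ≤ C * ‖z - x‖) :
    ‖f y - f x - f' x (y - x)‖ ≤ C / 2 * ‖y - x‖ ^ 2 := by
  set v := y - x
  have hpath : ∀ τ : ℝ, HasDerivAt (fun τ : ℝ => x + τ • v) v τ := fun τ => by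
    simpa using ((hasDerivAt_id τ).smul_const v).const_add x
  have hbound : ∀ τ ∈ Icc (0 : ℝ) 1,
      ‖f' (x + τ • v) v - f' (x + (0 : ℝ) • v) v‖ ≤ C * ‖v‖ ^ 2 * (τ - 0) := fun τ hτ =>
    calc ‖f' (x + τ • v) v - f' (x + (0 : ℝ) • v) v‖
        = ‖(f' (x + τ • v) - f' x) v‖ := by simp
      _ ≤ ‖f' (x + τ • v) - f' x‖ * ‖v‖ := (f' (x + τ • v) - f' x).le_opNorm v
      _ ≤ C * ‖τ • v‖ * ‖v‖ := by gcongr; simpa using hf' (x + τ • v)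
      _ = C * ‖v‖ ^ 2 * (τ - 0) := by rw [norm_smul, Real.norm_of_nonneg hτ.1]; ring
  have htaylor := norm_sub_sub_smul_le_of_norm_deriv_sub_le zero_le_one
    (fun τ _ => ((hf _).comp_hasDerivAt τ (hpath τ)).hasDerivWithinAt) hbound
  simp only [Function.comp_apply, zero_smul, one_smul, add_zero, sub_zero, one_pow, mul_one]
    at htaylor
  rwa [add_sub_cancel, mul_div_right_comm] at htaylor

theorem stmt_9_general {n : ℕ}
    (G Gt : ℝ → EuclideanSpace ℝ (Fin n) → EuclideanSpace ℝ (Fin n))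
    (Gx : ℝ → EuclideanSpace ℝ (Fin n) →
      (EuclideanSpace ℝ (Fin n) →L[ℝ] EuclideanSpace ℝ (Fin n)))
    (C₁ C₂ C₃ Ts tk : ℝ) (hTs : 0 < Ts)
    (xk : EuclideanSpace ℝ (Fin n))
    (hGx : ∀ t x, HasFDerivAt (G t) (Gx t x) x)
    (hGt : ∀ t x, HasDerivAt (fun s => G s x) (Gt t x) t)
    (hxxx : ∀ t x y, ‖Gx t x - Gx t y‖ ≤ C₁ * ‖x - y‖)
    (htxx : ∀ t x y, ‖Gt t x - Gt t y‖ ≤ C₂ * ‖x - y‖)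
    (httx : ∀ x t s, ‖Gt t x - Gt s x‖ ≤ C₃ * |t - s|) :
    ∀ x, ‖G (tk + Ts) x - (G tk xk + Gx tk xk (x - xk) + Ts • Gt tk xk)‖ ≤
      C₁ / 2 * ‖x - xk‖ ^ 2 + Ts * C₂ * ‖x - xk‖ + Ts ^ 2 / 2 * C₃ := by
  intro x
  have htime : ‖G (tk + Ts) x - G tk x - Ts • Gt tk x‖ ≤ C₃ / 2 * Ts ^ 2 := by
    have hlip : ∀ t ∈ Icc tk (tk + Ts), ‖Gt t x - Gt tk x‖ ≤ C₃ * (t - tk) := fun t ht => by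
      simpa only [abs_of_nonneg (sub_nonneg.2 ht.1)] using httx x t tk
    have htaylor := norm_sub_sub_smul_le_of_norm_deriv_sub_le (by linarith)
      (fun t _ => (hGt t x).hasDerivWithinAt) hlip
    rwa [add_sub_cancel_left] at htaylor
  have hmixed : ‖Ts • (Gt tk x - Gt tk xk)‖ ≤ Ts * C₂ * ‖x - xk‖ := by
    rw [norm_smul, Real.norm_of_nonneg hTs.le, mul_assoc]
    exact mul_le_mul_of_nonneg_left (htxx tk x xk) hTs.le
  have hspace : ‖G tk x - G tk xk - Gx tk xk (x - xk)‖ ≤ C₁ / 2 * ‖x - xk‖ ^ 2 :=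
    norm_sub_sub_fderiv_le_of_norm_fderiv_sub_le xk x (hGx tk) (fun z => hxxx tk z xk)
  calc ‖G (tk + Ts) x - (G tk xk + Gx tk xk (x - xk) + Ts • Gt tk xk)‖
      = ‖(G (tk + Ts) x - G tk x - Ts • Gt tk x) + Ts • (Gt tk x - Gt tk xk) +
          (G tk x - G tk xk - Gx tk xk (x - xk))‖ := by
        rw [smul_sub]; congr 1; abel
    _ ≤ C₃ / 2 * Ts ^ 2 + Ts * C₂ * ‖x - xk‖ + C₁ / 2 * ‖x - xk‖ ^ 2 :=
        (norm_add₃_le).trans (by gcongr)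
    _ = C₁ / 2 * ‖x - xk‖ ^ 2 + Ts * C₂ * ‖x - xk‖ + Ts ^ 2 / 2 * C₃ := by ring

/-- Second-order Taylor residual bound for the prediction model. Writing
`G(t,x) = ∇_x f(x;t)`, `Gx = ∇_{xx} f`, `Gt = ∇_{tx} f`, with the third-order
bounds `‖∇_{xxx} f‖ ≤ C₁`, `‖∇_{xtx} f‖ ≤ C₂`, `‖∇_{txx} f‖ ≤ C₂`,
`‖∇_{ttx} f‖ ≤ C₃` (expressed as Lipschitz bounds on `Gx`, `Gt`), the Taylor
residual of the prediction gradient satisfies, for all `x`,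
`‖G(t_k+T_s, x) - (G(t_k,x_k) + Gx(t_k,x_k)(x-x_k) + T_s Gt(t_k,x_k))‖
  ≤ (C₁/2)‖x-x_k‖² + T_s C₂ ‖x-x_k‖ + (T_s²/2) C₃`. -/
theorem stmt_9 {n : ℕ}
    (G Gt : ℝ → EuclideanSpace ℝ (Fin n) → EuclideanSpace ℝ (Fin n))
    (Gx : ℝ → EuclideanSpace ℝ (Fin n) →
      (EuclideanSpace ℝ (Fin n) →L[ℝ] EuclideanSpace ℝ (Fin n)))
    (C₁ C₂ C₃ Ts tk : ℝ) (hC₁ : 0 ≤ C₁) (hC₂ : 0 ≤ C₂) (hC₃ : 0 ≤ C₃) (hTs : 0 < Ts)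
    (xk : EuclideanSpace ℝ (Fin n))
    (hGx : ∀ t x, HasFDerivAt (G t) (Gx t x) x)
    (hGt : ∀ t x, HasDerivAt (fun s => G s x) (Gt t x) t)
    (hxxx : ∀ t x y, ‖Gx t x - Gx t y‖ ≤ C₁ * ‖x - y‖)
    (hxtx : ∀ x t s, ‖Gx t x - Gx s x‖ ≤ C₂ * |t - s|)
    (htxx : ∀ t x y, ‖Gt t x - Gt t y‖ ≤ C₂ * ‖x - y‖)
    (httx : ∀ x t s, ‖Gt t x - Gt s x‖ ≤ C₃ * |t - s|) :
    ∀ x, ‖G (tk + Ts) x - (G tk xk + Gx tk xk (x - xk) + Ts • Gt tk xk)‖ ≤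
      C₁ / 2 * ‖x - xk‖ ^ 2 + Ts * C₂ * ‖x - xk‖ + Ts ^ 2 / 2 * C₃ :=
  stmt_9_general G Gt Gx C₁ C₂ C₃ Ts tk hTs xk hGx hGt hxxx htxx httx
end

section
/- Let f(·;t) be m-strongly convex and L-smooth in x uniformly in t, with ‖∇_{tx}f(x;t)‖ ≤ C₀, and g proper closed convex. Then the solution map t ↦ x*(t) = argmin_x { f(x;t) + g(x) } is Lipschitz continuous with constant at most C₀/m: ‖x*(t) − x*(s)‖ ≤ (C₀/m)|t − s|. -/
/-!
Write `Φₜ = f(·;t) + g`. Since `Φₜ` is `m`-strongly convex and minimized at `x*(t)`, it grows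
quadratically away from `x*(t)`: `Φₜ y - Φₜ (x*(t)) ≥ (m/2)‖y - x*(t)‖²`. Adding this for `t` at
`x*(s)` and for `s` at `x*(t)`, the `g` terms cancel and
`m‖x*(t) - x*(s)‖² ≤ φ (x*(s)) - φ (x*(t))` with `φ = f(·;t) - f(·;s)`. The gradient of `φ` has
norm at most `C₀|t - s|`, so by the mean value inequality the right side is at most
`C₀|t - s|‖x*(t) - x*(s)‖`; dividing by `m‖x*(t) - x*(s)‖` gives the bound.
-/

open Set Filter Topology

theorem UniformConvexOn.modulus_le_sub_of_isMinOn {E : Type*} [NormedAddCommGroup E]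
    [NormedSpace ℝ E] {s : Set E} {φ : ℝ → ℝ} {F : E → ℝ} {x y : E}
    (hF : UniformConvexOn s φ F) (hx : IsMinOn F s x) (hxs : x ∈ s) (hys : y ∈ s) :
    φ ‖x - y‖ ≤ F y - F x := by
  have hstep : ∀ τ ∈ Ioo (0 : ℝ) 1, (1 - τ) * φ ‖x - y‖ ≤ F y - F x := by
    rintro τ ⟨hτ₀, hτ₁⟩
    have hconv := hF.2 hxs hys (sub_nonneg.2 hτ₁.le) hτ₀.le (sub_add_cancel 1 τ)
    have hmin : F x ≤ F _ := hx (hF.1 hxs hys (sub_nonneg.2 hτ₁.le) hτ₀.le (sub_add_cancel 1 τ))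
    simp only [smul_eq_mul] at hconv
    refine le_of_mul_le_mul_left ?_ hτ₀
    linarith
  have hlim : Tendsto (fun τ : ℝ => (1 - τ) * φ ‖x - y‖) (𝓝[>] 0) (𝓝 (φ ‖x - y‖)) := by
    have : Continuous fun τ : ℝ => (1 - τ) * φ ‖x - y‖ := by fun_prop
    simpa using (this.tendsto 0).mono_left nhdsWithin_le_nhds
  exact le_of_tendsto hlim (mem_of_superset (Ioo_mem_nhdsGT one_pos) hstep)

theorem norm_image_sub_le_of_norm_gradient_le {E : Type*} [NormedAddCommGroup E]
    [InnerProductSpace ℝ E] [CompleteSpace E] {φ : E → ℝ} {φ' : E → E} {C : ℝ}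
    (hφ : ∀ x, HasGradientAt φ (φ' x) x) (hbound : ∀ x, ‖φ' x‖ ≤ C) (x y : E) :
    ‖φ y - φ x‖ ≤ C * ‖y - x‖ :=
  convex_univ.norm_image_sub_le_of_norm_hasFDerivWithin_le
    (fun z _ => (hφ z).hasFDerivAt.hasFDerivWithinAt)
    (fun z _ => by simpa using hbound z) (mem_univ x) (mem_univ y)

theorem HasGradientAt.fun_sub {𝕜 E : Type*} [RCLike 𝕜] [NormedAddCommGroup E]
    [InnerProductSpace 𝕜 E] [CompleteSpace E] {φ ψ : E → 𝕜} {φ' ψ' x : E}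
    (hφ : HasGradientAt φ φ' x) (hψ : HasGradientAt ψ ψ' x) :
    HasGradientAt (fun y => φ y - ψ y) (φ' - ψ') x :=
  hasGradientAt_iff_hasFDerivAt.2 <| by
    rw [map_sub]
    exact hφ.hasFDerivAt.fun_sub hψ.hasFDerivAt

theorem stmt_10_general {n : ℕ} (f : ℝ → EuclideanSpace ℝ (Fin n) → ℝ)
    (gx : ℝ → EuclideanSpace ℝ (Fin n) → EuclideanSpace ℝ (Fin n))
    (g : EuclideanSpace ℝ (Fin n) → ℝ)
    (m C₀ : ℝ) (hm : 0 < m) (hC₀ : 0 ≤ C₀)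
    (hsc : ∀ t, StrongConvexOn Set.univ m (f t))
    (hgrad : ∀ t x, HasGradientAt (f t) (gx t x) x)
    (htLip : ∀ x t s, ‖gx t x - gx s x‖ ≤ C₀ * |t - s|)
    (hgconv : ConvexOn ℝ Set.univ g)
    (xstar : ℝ → EuclideanSpace ℝ (Fin n))
    (hxstar : ∀ t, IsMinOn (fun x => f t x + g x) Set.univ (xstar t)) :
    ∀ t s, ‖xstar t - xstar s‖ ≤ C₀ / m * |t - s| := by
  intro t s
  have hgrowth (τ : ℝ) (y : EuclideanSpace ℝ (Fin n)) :
      m / 2 * ‖xstar τ - y‖ ^ 2 ≤ (f τ y + g y) - (f τ (xstar τ) + g (xstar τ)) := by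
    simpa using ((hsc τ).add hgconv.uniformConvexOn_zero).modulus_le_sub_of_isMinOn
      (hxstar τ) (mem_univ _) (mem_univ y)
  have hmvt : ‖(f t (xstar s) - f s (xstar s)) - (f t (xstar t) - f s (xstar t))‖ ≤
      C₀ * |t - s| * ‖xstar s - xstar t‖ :=
    norm_image_sub_le_of_norm_gradient_le (fun u => (hgrad t u).fun_sub (hgrad s u))
      (fun u => htLip u t s) _ _
  have hsq : m * ‖xstar t - xstar s‖ ^ 2 ≤ C₀ * |t - s| * ‖xstar t - xstar s‖ := by
    have h₁ := hgrowth t (xstar s)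
    have h₂ := hgrowth s (xstar t)
    rw [norm_sub_rev (xstar s)] at h₂ hmvt
    linarith [le_of_abs_le ((Real.norm_eq_abs _).symm.trans_le hmvt)]
  rw [div_mul_eq_mul_div, le_div_iff₀ hm]
  obtain hd | hd := (norm_nonneg (xstar t - xstar s)).eq_or_lt
  · rw [← hd, zero_mul]
    positivity
  · exact le_of_mul_le_mul_right (by linarith) hd

/-- With `f(·;t)` `m`-strongly convex and `L`-smooth uniformly in `t`,
`‖∇_{tx} f‖ ≤ C₀`, and `g` proper closed convex, the solution map
`t ↦ x*(t) = argmin (f(·;t) + g)` is `(C₀/m)`-Lipschitz. -/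
theorem stmt_10 {n : ℕ} (f : ℝ → EuclideanSpace ℝ (Fin n) → ℝ)
    (gx : ℝ → EuclideanSpace ℝ (Fin n) → EuclideanSpace ℝ (Fin n))
    (g : EuclideanSpace ℝ (Fin n) → ℝ)
    (m L C₀ : ℝ) (hm : 0 < m) (hmL : m ≤ L) (hC₀ : 0 ≤ C₀)
    (hsc : ∀ t, StrongConvexOn Set.univ m (f t))
    (hgrad : ∀ t x, HasGradientAt (f t) (gx t x) x)
    (hLsmooth : ∀ t x y, ‖gx t x - gx t y‖ ≤ L * ‖x - y‖)
    (htLip : ∀ x t s, ‖gx t x - gx s x‖ ≤ C₀ * |t - s|)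
    (hgconv : ConvexOn ℝ Set.univ g) (hglsc : LowerSemicontinuous g)
    (xstar : ℝ → EuclideanSpace ℝ (Fin n))
    (hxstar : ∀ t, IsMinOn (fun x => f t x + g x) Set.univ (xstar t)) :
    ∀ t s, ‖xstar t - xstar s‖ ≤ C₀ / m * |t - s| :=
  stmt_10_general f gx g m C₀ hm hC₀ hsc hgrad htLip hgconv xstar hxstar
end

section
/- Let φ be m-strongly convex and L-smooth, g proper closed convex, γ ∈ (0, 1/L). The forward-backward envelope M(x) = min_y { φ(x) + ⟨∇φ(x), y − x⟩ + g(y) + ‖y − x‖²/(2γ) } satisfies argmin M = argmin (φ + g), and the minimum values coincide: min M = min (φ + g). -/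
/-!
By the descent lemma, every term of the infimum defining `M x` is at least
`(φ + g) y + c ‖y - x‖²` with `c = (1 - γL) / (2γ) > 0`, and the term at `y = x` is `(φ + g) x`.
So `M ≤ φ + g`, and if `a` minimizes the strongly convex (hence coercive) function `φ + g`, its
quadratic growth around `a` yields `M x ≥ (φ + g) a + κ ‖x - a‖²` for some `κ > 0`. Both functions
therefore have `a` as their only minimizer, with the common minimum value `(φ + g) a`.
-/

/-- The forward-backward envelope
`M(x) = inf_y { φ(x) + ⟨∇φ(x), y - x⟩ + g(y) + ‖y - x‖²/(2γ) }`. -/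
noncomputable def fbe {n : ℕ} (φ : EuclideanSpace ℝ (Fin n) → ℝ)
    (φ' : EuclideanSpace ℝ (Fin n) → EuclideanSpace ℝ (Fin n))
    (g : EuclideanSpace ℝ (Fin n) → ℝ) (γ : ℝ)
    (x : EuclideanSpace ℝ (Fin n)) : ℝ :=
  ⨅ y : EuclideanSpace ℝ (Fin n),
    (φ x + (inner ℝ (φ' x) (y - x) : ℝ) + g y + ‖y - x‖ ^ 2 / (2 * γ))

open Set Filter
open scoped RealInnerProductSpace

section Convexity

variable {E : Type*} [NormedAddCommGroup E] [InnerProductSpace ℝ E]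

theorem le_add_inner_add_mul_sq_of_lipschitz_gradient [CompleteSpace E] {φ : E → ℝ}
    {φ' : E → E} {L : ℝ} (hφ' : ∀ x, HasGradientAt φ (φ' x) x)
    (hφL : ∀ x y, ‖φ' x - φ' y‖ ≤ L * ‖x - y‖) (x y : E) :
    φ y ≤ φ x + ⟪φ' x, y - x⟫ + L / 2 * ‖y - x‖ ^ 2 := by
  set v := y - x
  let F : ℝ → ℝ := fun t => φ (x + t • v) - t * ⟪φ' x, v⟫ - L / 2 * t ^ 2 * ‖v‖ ^ 2
  have hF : ∀ t, HasDerivAt F (⟪φ' (x + t • v) - φ' x, v⟫ - L * t * ‖v‖ ^ 2) t := by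
    intro t
    have hline : HasDerivAt (fun t : ℝ => x + t • v) v t := by
      simpa using ((hasDerivAt_id t).smul_const v).const_add x
    have hφline : HasDerivAt (fun t : ℝ => φ (x + t • v)) ⟪φ' (x + t • v), v⟫ t :=
      (hφ' _).hasFDerivAt.comp_hasDerivAt t hline
    refine ((hφline.sub ((hasDerivAt_id t).mul_const ⟪φ' x, v⟫)).sub
      (((hasDerivAt_pow 2 t).const_mul (L / 2)).mul_const (‖v‖ ^ 2))).congr_deriv ?_
    simp only [inner_sub_left]
    ring
  have hF_nonpos : ∀ t ∈ interior (Icc (0 : ℝ) 1), deriv F t ≤ 0 := by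
    intro t ht
    rw [interior_Icc] at ht
    rw [(hF t).deriv, sub_nonpos]
    calc ⟪φ' (x + t • v) - φ' x, v⟫ ≤ ‖φ' (x + t • v) - φ' x‖ * ‖v‖ := real_inner_le_norm _ _
      _ ≤ L * ‖(x + t • v) - x‖ * ‖v‖ := by gcongr; exact hφL _ _
      _ = L * t * ‖v‖ ^ 2 := by
        rw [add_sub_cancel_left, norm_smul, Real.norm_of_nonneg ht.1.le]
        ring
  have hF01 : F 1 ≤ F 0 :=
    antitoneOn_of_deriv_nonpos (convex_Icc 0 1)
      (fun t _ => (hF t).continuousAt.continuousWithinAt)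
      (fun t _ => (hF t).differentiableAt.differentiableWithinAt) hF_nonpos
      (left_mem_Icc.2 zero_le_one) (right_mem_Icc.2 zero_le_one) zero_le_one
  simp only [F, v, one_smul, zero_smul, add_zero, add_sub_cancel] at hF01
  linarith

theorem StrongConvexOn.add_convexOn {s : Set E} {m : ℝ} {f g : E → ℝ}
    (hf : StrongConvexOn s m f) (hg : ConvexOn ℝ s g) : StrongConvexOn s m (f + g) := by
  simpa [StrongConvexOn] using hf.add (uniformConvexOn_zero.2 hg)

theorem StrongConvexOn.add_mul_sq_le_of_isMinOn {s : Set E} {m : ℝ} {f : E → ℝ} {a y : E}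
    (hf : StrongConvexOn s m f) (ha : IsMinOn f s a) (has : a ∈ s) (hys : y ∈ s) :
    f a + m / 4 * ‖y - a‖ ^ 2 ≤ f y := by
  have hhalf : (0 : ℝ) ≤ 1 / 2 := by norm_num
  have hmid := hf.2 has hys hhalf hhalf (add_halves 1)
  have hmin := ha (hf.1 has hys hhalf hhalf (add_halves 1))
  rw [norm_sub_rev] at hmid
  simp only [smul_eq_mul, mem_ofPred_eq] at hmid hmin
  linarith

variable [FiniteDimensional ℝ E]

theorem ConvexOn.exists_neg_mul_one_add_norm_le {h : E → ℝ} (hh : ConvexOn ℝ univ h) :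
    ∃ C, ∀ y, -C * (1 + ‖y‖) ≤ h y := by
  obtain ⟨C, hC⟩ := (isCompact_closedBall (0 : E) 1).exists_bound_of_continuousOn
    ((hh.continuousOn isOpen_univ).mono (subset_univ _))
  have hball : ∀ z : E, ‖z‖ ≤ 1 → |h z| ≤ C := fun z hz => hC z (mem_closedBall_zero_iff.2 hz)
  have hC0 : 0 ≤ C := (abs_nonneg _).trans (hball 0 (by simp))
  refine ⟨2 * C, fun y => ?_⟩
  rcases le_or_gt ‖y‖ 1 with hy | hy
  · nlinarith [neg_le_of_abs_le (hball y hy), norm_nonneg y]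
  · -- convexity on the segment from `0` to `y`, evaluated at the unit vector `‖y‖⁻¹ • y`
    have hy0 : 0 < ‖y‖ := one_pos.trans hy
    have ht1 : ‖y‖⁻¹ ≤ 1 := inv_le_one_of_one_le₀ hy.le
    have hseg := hh.2 (mem_univ 0) (mem_univ y) (sub_nonneg.2 ht1) (inv_nonneg.2 hy0.le)
      (sub_add_cancel 1 _)
    simp only [smul_zero, zero_add, smul_eq_mul] at hseg
    have hunit : ‖‖y‖⁻¹ • y‖ ≤ 1 := by
      rw [norm_smul, norm_inv, norm_norm, inv_mul_cancel₀ hy0.ne']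
    have h0 := abs_le.1 (hball 0 (by simp))
    have hunit' := abs_le.1 (hball _ hunit)
    have hhy : -(2 * C) ≤ ‖y‖⁻¹ * h y := by
      nlinarith [mul_nonneg (sub_nonneg.2 ht1) (sub_nonneg.2 h0.2),
        mul_nonneg (inv_nonneg.2 hy0.le) hC0]
    have : h y = ‖y‖ * (‖y‖⁻¹ * h y) := by field_simp
    nlinarith

theorem StrongConvexOn.tendsto_cocompact_atTop {m : ℝ} {f : E → ℝ}
    (hf : StrongConvexOn univ m f) (hm : 0 < m) : Tendsto f (cocompact E) atTop := by
  obtain ⟨C, hC⟩ := (strongConvexOn_iff_convex.1 hf).exists_neg_mul_one_add_norm_le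
  -- `m / 2 * r ^ 2 - C * (1 + r) ≥ r - K` with `K` below, by completing the square
  have hlin : ∀ y, ‖y‖ + -(C + (C + 1) ^ 2 / (2 * m)) ≤ f y := by
    intro y
    have := hC y
    have hsq : 0 ≤ m / 2 * (‖y‖ - (C + 1) / m) ^ 2 := by positivity
    have : m / 2 * (‖y‖ - (C + 1) / m) ^ 2
        = m / 2 * ‖y‖ ^ 2 - (C + 1) * ‖y‖ + (C + 1) ^ 2 / (2 * m) := by
      field_simp; ring
    linarith
  exact tendsto_atTop_mono hlin
    (tendsto_atTop_add_const_right _ _ tendsto_norm_cocompact_atTop)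

theorem StrongConvexOn.exists_isMinOn {m : ℝ} {f : E → ℝ} (hf : StrongConvexOn univ m f)
    (hm : 0 < m) : ∃ a, IsMinOn f univ a := by
  have hcont : Continuous f :=
    continuousOn_univ.1 ((hf.convexOn fun r => by positivity).continuousOn isOpen_univ)
  obtain ⟨a, ha⟩ := hcont.exists_forall_le (hf.tendsto_cocompact_atTop hm)
  exact ⟨a, isMinOn_univ_iff.2 ha⟩

end Convexity

theorem min_div_two_mul_norm_add_sq_le {E : Type*} [SeminormedAddCommGroup E] {a b : ℝ}
    (ha : 0 ≤ a) (hb : 0 ≤ b) (u v : E) :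
    min a b / 2 * ‖u + v‖ ^ 2 ≤ a * ‖u‖ ^ 2 + b * ‖v‖ ^ 2 := by
  have hmin : 0 ≤ min a b := le_min ha hb
  calc min a b / 2 * ‖u + v‖ ^ 2 ≤ min a b / 2 * (2 * (‖u‖ ^ 2 + ‖v‖ ^ 2)) := by
        gcongr
        exact (pow_le_pow_left₀ (norm_nonneg _) (norm_add_le u v) 2).trans add_sq_le
    _ = min a b * ‖u‖ ^ 2 + min a b * ‖v‖ ^ 2 := by ring
    _ ≤ a * ‖u‖ ^ 2 + b * ‖v‖ ^ 2 := by gcongr <;> simp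

section Sandwich

variable {α : Type*} {M f : α → ℝ} {a : α}

theorem IsMinOn.iInf_eq_iInf_of_le (ha : IsMinOn f univ a) (hle : ∀ x, M x ≤ f x)
    (hM : ∀ x, f a ≤ M x) : ⨅ x, M x = ⨅ x, f x := by
  have : Nonempty α := ⟨a⟩
  have hMa : M a = f a := le_antisymm (hle a) (hM a)
  rw [ciInf_eq_of_forall_ge_of_forall_gt_exists_lt hM fun _ hw => ⟨a, hMa ▸ hw⟩,
    ciInf_eq_of_forall_ge_of_forall_gt_exists_lt (isMinOn_univ_iff.1 ha) fun _ hw => ⟨a, hw⟩]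

theorem IsMinOn.isMinOn_univ_iff_of_le (ha : IsMinOn f univ a) (hle : ∀ x, M x ≤ f x)
    (hM : ∀ x, f a ≤ M x) (hM_eq : ∀ x, M x ≤ f a → x = a) (x : α) :
    IsMinOn M univ x ↔ IsMinOn f univ x := by
  refine ⟨fun hx => ?_, fun hx => isMinOn_univ_iff.2 fun z => ?_⟩
  · rwa [hM_eq x ((isMinOn_univ_iff.1 hx a).trans (hle a))]
  · exact (hle x).trans ((isMinOn_univ_iff.1 hx a).trans (hM z))

end Sandwich

section ForwardBackwardEnvelope

variable {n : ℕ} {φ g : EuclideanSpace ℝ (Fin n) → ℝ}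
  {φ' : EuclideanSpace ℝ (Fin n) → EuclideanSpace ℝ (Fin n)} {L γ : ℝ}

theorem add_mul_sq_le_fbe_summand (hφ' : ∀ x, HasGradientAt φ (φ' x) x)
    (hφL : ∀ x y, ‖φ' x - φ' y‖ ≤ L * ‖x - y‖) (hγ : 0 < γ) (x y : EuclideanSpace ℝ (Fin n)) :
    φ y + g y + (1 - γ * L) / (2 * γ) * ‖y - x‖ ^ 2
      ≤ φ x + ⟪φ' x, y - x⟫ + g y + ‖y - x‖ ^ 2 / (2 * γ) := by
  have hsplit : ‖y - x‖ ^ 2 / (2 * γ)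
      = L / 2 * ‖y - x‖ ^ 2 + (1 - γ * L) / (2 * γ) * ‖y - x‖ ^ 2 := by
    field_simp
    ring
  linarith [le_add_inner_add_mul_sq_of_lipschitz_gradient hφ' hφL x y]

theorem fbe_le_add (hφ' : ∀ x, HasGradientAt φ (φ' x) x)
    (hφL : ∀ x y, ‖φ' x - φ' y‖ ≤ L * ‖x - y‖) (hγ : 0 < γ) (hγL : γ * L ≤ 1) {b : ℝ}
    (hb : ∀ y, b ≤ φ y + g y) (x : EuclideanSpace ℝ (Fin n)) :
    fbe φ φ' g γ x ≤ φ x + g x := by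
  have hbdd : BddBelow (range fun y => φ x + ⟪φ' x, y - x⟫ + g y + ‖y - x‖ ^ 2 / (2 * γ)) := by
    refine ⟨b, forall_mem_range.2 fun y => ?_⟩
    have : 0 ≤ (1 - γ * L) / (2 * γ) * ‖y - x‖ ^ 2 := by
      have : 0 ≤ 1 - γ * L := sub_nonneg.2 hγL
      positivity
    linarith [hb y, add_mul_sq_le_fbe_summand (g := g) hφ' hφL hγ x y]
  simpa [fbe] using ciInf_le hbdd x

theorem exists_pos_add_mul_sq_le_fbe (hφ' : ∀ x, HasGradientAt φ (φ' x) x)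
    (hφL : ∀ x y, ‖φ' x - φ' y‖ ≤ L * ‖x - y‖) (hγ : 0 < γ) (hγL : γ * L < 1)
    {a : EuclideanSpace ℝ (Fin n)} {μ : ℝ} (hμ : 0 < μ)
    (hgrowth : ∀ y, φ a + g a + μ * ‖y - a‖ ^ 2 ≤ φ y + g y) :
    ∃ κ > 0, ∀ x, φ a + g a + κ * ‖x - a‖ ^ 2 ≤ fbe φ φ' g γ x := by
  set c := (1 - γ * L) / (2 * γ)
  have hc : 0 < c := div_pos (sub_pos.2 hγL) (by positivity)
  refine ⟨min μ c / 2, by positivity, fun x => le_ciInf fun y => ?_⟩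
  calc φ a + g a + min μ c / 2 * ‖x - a‖ ^ 2
      ≤ φ a + g a + (μ * ‖y - a‖ ^ 2 + c * ‖x - y‖ ^ 2) := by
        gcongr
        simpa using min_div_two_mul_norm_add_sq_le hμ.le hc.le (y - a) (x - y)
    _ ≤ φ y + g y + c * ‖y - x‖ ^ 2 := by rw [norm_sub_rev x y]; linarith [hgrowth y]
    _ ≤ _ := add_mul_sq_le_fbe_summand hφ' hφL hγ x y

end ForwardBackwardEnvelope

theorem stmt_12_general {n : ℕ} (φ : EuclideanSpace ℝ (Fin n) → ℝ)
    (φ' : EuclideanSpace ℝ (Fin n) → EuclideanSpace ℝ (Fin n))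
    (g : EuclideanSpace ℝ (Fin n) → ℝ)
    (m L γ : ℝ) (hm : 0 < m) (hγ0 : 0 < γ) (hγL : γ < 1 / L)
    (hφsc : StrongConvexOn Set.univ m φ)
    (hφ' : ∀ x, HasGradientAt φ (φ' x) x)
    (hφL : ∀ x y, ‖φ' x - φ' y‖ ≤ L * ‖x - y‖)
    (hgconv : ConvexOn ℝ Set.univ g) :
    (∀ x, IsMinOn (fbe φ φ' g γ) Set.univ x ↔
        IsMinOn (fun z => φ z + g z) Set.univ x) ∧
      (⨅ x, fbe φ φ' g γ x) = ⨅ x, (φ x + g x) := by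
  have hγL' : γ * L < 1 := by rwa [lt_div_iff₀ (one_div_pos.1 (hγ0.trans hγL))] at hγL
  have hf : StrongConvexOn univ m (φ + g) := hφsc.add_convexOn hgconv
  obtain ⟨a, ha⟩ := hf.exists_isMinOn hm
  obtain ⟨κ, hκ, hM⟩ := exists_pos_add_mul_sq_le_fbe hφ' hφL hγ0 hγL' (by positivity : 0 < m / 4)
    fun y => hf.add_mul_sq_le_of_isMinOn ha (mem_univ a) (mem_univ y)
  have hle : ∀ x, fbe φ φ' g γ x ≤ φ x + g x :=
    fbe_le_add hφ' hφL hγ0 hγL'.le (isMinOn_univ_iff.1 ha)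
  have hge : ∀ x, φ a + g a ≤ fbe φ φ' g γ x := fun x =>
    le_trans (le_add_of_nonneg_right (by positivity)) (hM x)
  have heq : ∀ x, fbe φ φ' g γ x ≤ φ a + g a → x = a := fun x hx => by
    have : κ * ‖x - a‖ ^ 2 ≤ 0 := by linarith [hM x]
    have : ‖x - a‖ ^ 2 = 0 := le_antisymm (nonpos_of_mul_nonpos_right this hκ) (sq_nonneg _)
    simpa [sub_eq_zero] using this
  exact ⟨ha.isMinOn_univ_iff_of_le hle hge heq, ha.iInf_eq_iInf_of_le hle hge⟩

/-- For `φ ∈ S_{m,L}`, `g` proper closed convex and `γ ∈ (0, 1/L)`, the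
forward-backward envelope has the same minimizers as `φ + g`, and the same
minimum value. -/
theorem stmt_12 {n : ℕ} (φ : EuclideanSpace ℝ (Fin n) → ℝ)
    (φ' : EuclideanSpace ℝ (Fin n) → EuclideanSpace ℝ (Fin n))
    (g : EuclideanSpace ℝ (Fin n) → ℝ)
    (m L γ : ℝ) (hm : 0 < m) (hmL : m ≤ L) (hγ0 : 0 < γ) (hγL : γ < 1 / L)
    (hφsc : StrongConvexOn Set.univ m φ)
    (hφ' : ∀ x, HasGradientAt φ (φ' x) x)
    (hφL : ∀ x y, ‖φ' x - φ' y‖ ≤ L * ‖x - y‖)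
    (hgconv : ConvexOn ℝ Set.univ g) (hglsc : LowerSemicontinuous g) :
    (∀ x, IsMinOn (fbe φ φ' g γ) Set.univ x ↔
        IsMinOn (fun z => φ z + g z) Set.univ x) ∧
      (⨅ x, fbe φ φ' g γ x) = ⨅ x, (φ x + g x) :=
  stmt_12_general φ φ' g m L γ hm hγ0 hγL hφsc hφ' hφL hgconv
end

section
/- Let M(x) be the forward-backward envelope of L-smooth φ and proper closed convex g with γ ∈ (0, 1/L). Then for all x: (φ+g)(T_γ(x)) ≤ M(x) ≤ (φ+g)(x), where T_γ(x) = prox_{γg}(x − γ∇φ(x)) is the forward-backward operator. -/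
open RealInnerProductSpace

section InnerProductSpace

variable {E : Type*} [NormedAddCommGroup E] [InnerProductSpace ℝ E]

theorem le_add_inner_add_sq_of_gradient_lipschitz [CompleteSpace E]
    {f : E → ℝ} {f' : E → E} {L : ℝ} (hf : ∀ x, HasGradientAt f (f' x) x) (hL : ∀ x y, ‖f' x - f' y‖ ≤ L * ‖x - y‖)
    (x y : E) : f y ≤ f x + ⟪f' x, y - x⟫ + L / 2 * ‖y - x‖ ^ 2 := by
  set v := y - x
  let h : ℝ → ℝ := fun t => f (x + t • v) - t * ⟪f' x, v⟫ - L / 2 * t ^ 2 * ‖v‖ ^ 2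
  have hderiv : ∀ t, HasDerivAt h (⟪f' (x + t • v), v⟫ - ⟪f' x, v⟫ - L * t * ‖v‖ ^ 2) t := by
    intro t
    have hline : HasDerivAt (fun t : ℝ => x + t • v) v t := by
      simpa using ((hasDerivAt_id t).smul_const v).const_add x
    have := (((hf _).hasFDerivAt.comp_hasDerivAt t hline).sub
      ((hasDerivAt_id t).mul_const ⟪f' x, v⟫)).sub
      (((hasDerivAt_pow 2 t).const_mul (L / 2)).mul_const (‖v‖ ^ 2))
    exact this.congr_deriv (by rw [InnerProductSpace.toDual_apply_apply]; ring)
  have hderiv_nonpos : ∀ t ∈ interior (Set.Ici (0 : ℝ)),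
      ⟪f' (x + t • v), v⟫ - ⟪f' x, v⟫ - L * t * ‖v‖ ^ 2 ≤ 0 := by
    intro t ht
    rw [interior_Ici] at ht
    calc ⟪f' (x + t • v), v⟫ - ⟪f' x, v⟫ - L * t * ‖v‖ ^ 2
        = ⟪f' (x + t • v) - f' x, v⟫ - L * t * ‖v‖ ^ 2 := by rw [inner_sub_left]
      _ ≤ ‖f' (x + t • v) - f' x‖ * ‖v‖ - L * t * ‖v‖ ^ 2 := by
          gcongr; exact real_inner_le_norm _ _
      _ ≤ L * ‖(x + t • v) - x‖ * ‖v‖ - L * t * ‖v‖ ^ 2 := by gcongr; exact hL _ _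
      _ = 0 := by rw [add_sub_cancel_left, norm_smul, Real.norm_of_nonneg ht.out.le]; ring
  have hanti : AntitoneOn h (Set.Ici 0) := antitoneOn_of_hasDerivWithinAt_nonpos
    (convex_Ici 0) (fun t _ => (hderiv t).continuousAt.continuousWithinAt)
    (fun t _ => (hderiv t).hasDerivWithinAt) hderiv_nonpos
  have h_one_le_zero : h 1 ≤ h 0 :=
    hanti Set.self_mem_Ici (Set.mem_Ici.mpr zero_le_one) zero_le_one
  simp only [h, v, one_smul, add_sub_cancel, zero_smul, add_zero] at h_one_le_zero
  linarith

/-- The function of `y` whose infimum is `fbe φ φ' g γ x`. -/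
noncomputable def fbeModel (φ : E → ℝ) (φ' : E → E) (g : E → ℝ) (γ : ℝ) (x y : E) : ℝ :=
  φ x + ⟪φ' x, y - x⟫ + g y + ‖y - x‖ ^ 2 / (2 * γ)

variable {φ : E → ℝ} {φ' : E → E} {g : E → ℝ} {γ : ℝ}

theorem fbeModel_self (x : E) : fbeModel φ φ' g γ x x = φ x + g x := by
  simp [fbeModel]

theorem fbeModel_eq_complete_square (hγ : γ ≠ 0) (x y : E) :
    fbeModel φ φ' g γ x y =
      φ x - γ / 2 * ‖φ' x‖ ^ 2 + (g y + ‖y - (x - γ • φ' x)‖ ^ 2 / (2 * γ)) := by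
  have hsq : ‖y - (x - γ • φ' x)‖ ^ 2
      = ‖y - x‖ ^ 2 + 2 * γ * ⟪φ' x, y - x⟫ + γ ^ 2 * ‖φ' x‖ ^ 2 := by
    rw [sub_sub_eq_add_sub, add_sub_right_comm, norm_add_sq_real, real_inner_smul_right,
      real_inner_comm, norm_smul, Real.norm_eq_abs, mul_pow, sq_abs]
    ring
  rw [fbeModel, hsq]
  field_simp
  ring

theorem isMinOn_fbeModel (hγ : γ ≠ 0) {x p : E}
    (hp : IsMinOn (fun y => g y + ‖y - (x - γ • φ' x)‖ ^ 2 / (2 * γ)) Set.univ p) :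
    IsMinOn (fbeModel φ φ' g γ x) Set.univ p := isMinOn_univ_iff.mpr fun y => by
  rw [fbeModel_eq_complete_square hγ, fbeModel_eq_complete_square hγ]
  linarith [isMinOn_univ_iff.mp hp y]

theorem add_le_fbeModel [CompleteSpace E] {L : ℝ} (hγ : 0 < γ) (hLγ : L * γ ≤ 1)
    (hφ' : ∀ x, HasGradientAt φ (φ' x) x) (hφL : ∀ x y, ‖φ' x - φ' y‖ ≤ L * ‖x - y‖)
    (x y : E) : φ y + g y ≤ fbeModel φ φ' g γ x y := by
  have hquad : L / 2 * ‖y - x‖ ^ 2 ≤ ‖y - x‖ ^ 2 / (2 * γ) := by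
    rw [div_mul_eq_mul_div, div_le_div_iff₀ two_pos (by positivity)]
    nlinarith [sq_nonneg ‖y - x‖]
  have := le_add_inner_add_sq_of_gradient_lipschitz hφ' hφL x y
  rw [fbeModel]
  linarith

end InnerProductSpace

theorem fbe_eq_fbeModel_of_isMinOn {n : ℕ} {φ : EuclideanSpace ℝ (Fin n) → ℝ}
    {φ' : EuclideanSpace ℝ (Fin n) → EuclideanSpace ℝ (Fin n)}
    {g : EuclideanSpace ℝ (Fin n) → ℝ} {γ : ℝ} {x p : EuclideanSpace ℝ (Fin n)}
    (hp : IsMinOn (fbeModel φ φ' g γ x) Set.univ p) :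
    fbe φ φ' g γ x = fbeModel φ φ' g γ x p :=
  le_antisymm (ciInf_le ⟨_, Set.forall_mem_range.mpr (isMinOn_univ_iff.mp hp)⟩ p)
    (le_ciInf (isMinOn_univ_iff.mp hp))

theorem stmt_14_general {n : ℕ} (φ : EuclideanSpace ℝ (Fin n) → ℝ)
    (φ' : EuclideanSpace ℝ (Fin n) → EuclideanSpace ℝ (Fin n))
    (g : EuclideanSpace ℝ (Fin n) → ℝ)
    (L γ : ℝ) (hγ0 : 0 < γ) (hγL : γ < 1 / L)
    (hφ' : ∀ x, HasGradientAt φ (φ' x) x)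
    (hφL : ∀ x y, ‖φ' x - φ' y‖ ≤ L * ‖x - y‖)
    (prox : EuclideanSpace ℝ (Fin n) → EuclideanSpace ℝ (Fin n))
    (hprox : ∀ x, IsMinOn (fun y => g y + ‖y - x‖ ^ 2 / (2 * γ)) Set.univ (prox x)) :
    ∀ x, φ (prox (x - γ • φ' x)) + g (prox (x - γ • φ' x)) ≤ fbe φ φ' g γ x ∧
      fbe φ φ' g γ x ≤ φ x + g x := by
  intro x
  have hL : 0 < L := one_div_pos.mp (hγ0.trans hγL)
  have hLγ : L * γ ≤ 1 := by rw [mul_comm]; exact ((lt_div_iff₀ hL).mp hγL).le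
  have hmin := isMinOn_fbeModel (φ := φ) hγ0.ne' (hprox (x - γ • φ' x))
  rw [fbe_eq_fbeModel_of_isMinOn hmin]
  exact ⟨add_le_fbeModel hγ0 hLγ hφ' hφL x _,
    (isMinOn_univ_iff.mp hmin x).trans (fbeModel_self x).le⟩

/-- Sandwich inequality for the forward-backward envelope:
`(φ+g)(T_γ(x)) ≤ M(x) ≤ (φ+g)(x)` where `T_γ(x) = prox_{γg}(x - γ∇φ(x))`. -/
theorem stmt_14 {n : ℕ} (φ : EuclideanSpace ℝ (Fin n) → ℝ)
    (φ' : EuclideanSpace ℝ (Fin n) → EuclideanSpace ℝ (Fin n))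
    (g : EuclideanSpace ℝ (Fin n) → ℝ)
    (L γ : ℝ) (hL : 0 < L) (hγ0 : 0 < γ) (hγL : γ < 1 / L)
    (hφconv : ConvexOn ℝ Set.univ φ)
    (hφ' : ∀ x, HasGradientAt φ (φ' x) x)
    (hφL : ∀ x y, ‖φ' x - φ' y‖ ≤ L * ‖x - y‖)
    (hgconv : ConvexOn ℝ Set.univ g) (hglsc : LowerSemicontinuous g)
    (prox : EuclideanSpace ℝ (Fin n) → EuclideanSpace ℝ (Fin n))
    (hprox : ∀ x, IsMinOn (fun y => g y + ‖y - x‖ ^ 2 / (2 * γ)) Set.univ (prox x)) :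
    ∀ x, φ (prox (x - γ • φ' x)) + g (prox (x - γ • φ' x)) ≤ fbe φ φ' g γ x ∧
      fbe φ φ' g γ x ≤ φ x + g x :=
  stmt_14_general φ φ' g L γ hγ0 hγL hφ' hφL prox hprox
end

section
/- If e_{k+1} ≤ ζ^C(ζ^P e_k + (ζ^P + 1)(a₁ e_k + a₀)) + ζ^C ζ^P b with ζ ∈ (0,1), a₁, a₀, b ≥ 0, and the contraction condition ζ^C[ζ^P + (ζ^P + 1)a₁] < 1 holds, then e_k remains bounded and limsup e_k ≤ ζ^C(ζ^P b + (ζ^P + 1)a₀)/(1 − ζ^C[ζ^P + (ζ^P+1)a₁]). -/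
/-!
Writing `ρ = ζ^C (ζ^P + (ζ^P + 1) a₁)` and `δ = ζ^C (ζ^P b + (ζ^P + 1) a₀)`, the recursion is
`e_{k+1} ≤ ρ e_k + δ`. Its fixed point `L = δ / (1 - ρ)` satisfies `ρ L + δ = L`, so by induction
`e_k ≤ L + ρ^k (e_0 - L)`. Since `0 ≤ ρ < 1`, this majorant converges to `L`, which gives both
boundedness and `limsup e ≤ L`.
-/

open Filter Topology

section AffineRecursion

variable {u : ℕ → ℝ} {ρ δ : ℝ}

theorem le_fixedPoint_add_pow_mul (hρ0 : 0 ≤ ρ) (hρ1 : ρ ≠ 1)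
    (hrec : ∀ k, u (k + 1) ≤ ρ * u k + δ) (k : ℕ) :
    u k ≤ δ / (1 - ρ) + ρ ^ k * (u 0 - δ / (1 - ρ)) := by
  have hfix : ρ * (δ / (1 - ρ)) + δ = δ / (1 - ρ) := by
    field_simp [sub_ne_zero.mpr hρ1.symm]
    ring
  set L := δ / (1 - ρ)
  induction k with
  | zero => simp
  | succ n ih =>
    calc u (n + 1) ≤ ρ * u n + δ := hrec n
      _ ≤ ρ * (L + ρ ^ n * (u 0 - L)) + δ := by gcongr
      _ = (ρ * L + δ) + ρ ^ (n + 1) * (u 0 - L) := by ring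
      _ = L + ρ ^ (n + 1) * (u 0 - L) := by rw [hfix]

theorem bddAbove_and_limsup_le_of_le_mul_add (hρ0 : 0 ≤ ρ) (hρ1 : ρ < 1)
    (hrec : ∀ k, u (k + 1) ≤ ρ * u k + δ) (hbdd : IsBoundedUnder (· ≥ ·) atTop u) :
    (∃ M, ∀ k, u k ≤ M) ∧ limsup u atTop ≤ δ / (1 - ρ) := by
  set L := δ / (1 - ρ)
  have hmaj : ∀ k, u k ≤ L + ρ ^ k * (u 0 - L) :=
    le_fixedPoint_add_pow_mul hρ0 hρ1.ne hrec
  have htend : Tendsto (fun k ↦ L + ρ ^ k * (u 0 - L)) atTop (𝓝 L) := by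
    simpa using ((tendsto_pow_atTop_nhds_zero_of_lt_one hρ0 hρ1).mul_const (u 0 - L)).const_add L
  obtain ⟨M, hM⟩ := htend.bddAbove_range
  refine ⟨⟨M, fun k ↦ (hmaj k).trans (hM ⟨k, rfl⟩)⟩, ?_⟩
  calc limsup u atTop ≤ limsup (fun k ↦ L + ρ ^ k * (u 0 - L)) atTop :=
        limsup_le_limsup (.of_forall hmaj) hbdd.isCoboundedUnder_le htend.isBoundedUnder_le
    _ = L := htend.limsup_eq

end AffineRecursion

theorem stmt_15_general (e : ℕ → ℝ) (ζ a₁ a₀ b : ℝ) (P C : ℕ)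
    (hζ0 : 0 < ζ) (ha₁ : 0 ≤ a₁)
    (he : ∀ k, 0 ≤ e k)
    (hrec : ∀ k, e (k + 1) ≤
      ζ ^ C * (ζ ^ P * e k + (ζ ^ P + 1) * (a₁ * e k + a₀)) + ζ ^ C * ζ ^ P * b)
    (hcontr : ζ ^ C * (ζ ^ P + (ζ ^ P + 1) * a₁) < 1) :
    (∃ M, ∀ k, e k ≤ M) ∧
      Filter.limsup e Filter.atTop ≤
        ζ ^ C * (ζ ^ P * b + (ζ ^ P + 1) * a₀) /
          (1 - ζ ^ C * (ζ ^ P + (ζ ^ P + 1) * a₁)) := by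
  refine bddAbove_and_limsup_le_of_le_mul_add (by positivity) hcontr (fun k ↦ ?_)
    (isBoundedUnder_of ⟨0, he⟩)
  linarith [hrec k]

/-- Prediction-correction error recursion: if
`e_{k+1} ≤ ζ^C (ζ^P e_k + (ζ^P + 1)(a₁ e_k + a₀)) + ζ^C ζ^P b` with
`ζ ∈ (0,1)`, `a₁, a₀, b ≥ 0`, and `ζ^C (ζ^P + (ζ^P + 1) a₁) < 1`, then the
sequence remains bounded and
`limsup e ≤ ζ^C (ζ^P b + (ζ^P + 1) a₀) / (1 - ζ^C (ζ^P + (ζ^P + 1) a₁))`. -/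
theorem stmt_15 (e : ℕ → ℝ) (ζ a₁ a₀ b : ℝ) (P C : ℕ)
    (hζ0 : 0 < ζ) (hζ1 : ζ < 1) (ha₁ : 0 ≤ a₁) (ha₀ : 0 ≤ a₀) (hb : 0 ≤ b)
    (he : ∀ k, 0 ≤ e k)
    (hrec : ∀ k, e (k + 1) ≤
      ζ ^ C * (ζ ^ P * e k + (ζ ^ P + 1) * (a₁ * e k + a₀)) + ζ ^ C * ζ ^ P * b)
    (hcontr : ζ ^ C * (ζ ^ P + (ζ ^ P + 1) * a₁) < 1) :
    (∃ M, ∀ k, e k ≤ M) ∧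
      Filter.limsup e Filter.atTop ≤
        ζ ^ C * (ζ ^ P * b + (ζ ^ P + 1) * a₀) /
          (1 - ζ ^ C * (ζ ^ P + (ζ ^ P + 1) * a₁)) :=
  stmt_15_general e ζ a₁ a₀ b P C hζ0 ha₁ he hrec hcontr
end
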